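/- arXiv:2002.08305 — 2 statements merged into one kernel-verified Lean document; each statement's English description precedes it below -/
import Mathlib

section
/- Let G be the abelian group with presentation ⟨A, B, C, D | D = A·B·C⁻¹, C² = B²⟩. Then G is isomorphic to ℤ ⊕ ℤ ⊕ ℤ/2ℤ. -/
/-- The subgroup of relations: D = A + B - C (i.e. A + B - C - D = 0) and 2C = 2B. -/
def relSubgroup : AddSubgroup (ℤ × ℤ × ℤ × ℤ) :=
  AddSubgroup.closure {(1, 1, -1, -1), (0, -2, 2, 0)}

/-- The abelian group ⟨A, B, C, D | D = A·B·C⁻¹, C² = B²⟩, written additively. -/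
abbrev PresGroup := (ℤ × ℤ × ℤ × ℤ) ⧸ relSubgroup

/-!
Send A, B, C, D to (1,0,0), (0,1,0), (0,1,1), (1,0,1) in ℤ × ℤ × ℤ/2, so that C - B goes to
(0,0,1). This map is onto, and (a,b,c,d) lies in its kernel iff a = -d, b = -c and c + d is even,
which is exactly the set of combinations m(1,1,-1,-1) + n(0,-2,2,0).
-/

def presProj : ℤ × ℤ × ℤ × ℤ →+ ℤ × ℤ × ZMod 2 where
  toFun p := (p.1 + p.2.2.2, p.2.1 + p.2.2.1, ((p.2.2.1 + p.2.2.2 : ℤ) : ZMod 2))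
  map_zero' := by simp
  map_add' := by
    rintro ⟨a, b, c, d⟩ ⟨a', b', c', d'⟩
    ext <;> simp only [Prod.mk_add_mk, Int.cast_add] <;> ring

lemma presProj_ker : presProj.ker = relSubgroup := by
  ext ⟨a, b, c, d⟩
  simp only [relSubgroup, AddSubgroup.mem_closure_pair, AddMonoidHom.mem_ker, presProj,
    AddMonoidHom.coe_mk, ZeroHom.coe_mk, Prod.ext_iff, Prod.fst_zero, Prod.snd_zero,
    ZMod.intCast_zmod_eq_zero_iff_dvd, Prod.smul_mk, smul_eq_mul, Prod.mk_add_mk]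
  constructor
  · rintro ⟨had, hbc, k, hk⟩
    exact ⟨a, k - d, by omega, by omega, by omega, by omega⟩
  · rintro ⟨m, n, rfl, rfl, rfl, rfl⟩
    exact ⟨by ring, by ring, n - m, by ring⟩

lemma presProj_surjective : Function.Surjective presProj := by
  rintro ⟨x, y, z⟩
  obtain ⟨c, rfl⟩ := ZMod.intCast_surjective z
  exact ⟨(x, y - c, c, 0), by simp [presProj]⟩

theorem pres_group_iso : Nonempty (PresGroup ≃+ (ℤ × ℤ × ZMod 2)) :=
  ⟨(QuotientAddGroup.quotientAddEquivOfEq presProj_ker.symm).trans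
    (QuotientAddGroup.quotientKerEquivOfSurjective presProj presProj_surjective)⟩
end

section
/- Let m, l, p, q, r, s and m', l', p', q', r', s' be integers with p + q + r + s ≡ m (mod 2) and p' + q' + r' + s' ≡ m' (mod 2). Let ε = m mod 2 ∈ {0,1}. Suppose m = m', 2l + q + s = 2l' + q' + s', and ((p,q),(r,s+ε)) ≐ ((p',q'),(r',s'+ε)), where ≐ identifies a pair of pairs with its simultaneous swap. Then either (l, p, q, r, s) = (l', p', q', r', s'), or (p = q', q = p', r = s' + ε, s = r' − ε, and 2l = 2l' − p' + q' − r' + s' + ε). -/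
/-- The relation ≐ : simultaneous swap within both pairs. -/
def doteq : (ℤ × ℤ) × (ℤ × ℤ) → (ℤ × ℤ) × (ℤ × ℤ) → Prop :=
  fun x y =>
    (x.1.1 = y.1.1 ∧ x.1.2 = y.1.2 ∧ x.2.1 = y.2.1 ∧ x.2.2 = y.2.2) ∨
    (x.1.1 = y.1.2 ∧ x.1.2 = y.1.1 ∧ x.2.1 = y.2.2 ∧ x.2.2 = y.2.1)

theorem doteq_iff {x y : (ℤ × ℤ) × (ℤ × ℤ)} :
    doteq x y ↔ x = y ∨ x = Prod.map Prod.swap Prod.swap y := by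
  obtain ⟨⟨a, b⟩, c, d⟩ := x
  obtain ⟨⟨a', b'⟩, c', d'⟩ := y
  simp only [doteq, Prod.map, Prod.swap, Prod.mk.injEq]
  tauto

theorem classification_core_general (m l p q r s l' p' q' r' s' : ℤ)
    (hJ : 2 * l + q + s = 2 * l' + q' + s')
    (hF : doteq ((p, q), (r, s + m % 2)) ((p', q'), (r', s' + m % 2))) :
    (l = l' ∧ p = p' ∧ q = q' ∧ r = r' ∧ s = s') ∨
    (p = q' ∧ q = p' ∧ r = s' + m % 2 ∧ s = r' - m % 2 ∧
      2 * l = 2 * l' - p' + q' - r' + s' + m % 2) := by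
  rcases doteq_iff.1 hF with h | h
  · simp only [Prod.mk.injEq] at h
    left; omega
  · simp only [Prod.map, Prod.swap, Prod.mk.injEq] at h
    right; omega

theorem classification_core (m l p q r s m' l' p' q' r' s' : ℤ)
    (hpar : p + q + r + s ≡ m [ZMOD 2]) (hpar' : p' + q' + r' + s' ≡ m' [ZMOD 2])
    (hm : m = m') (hJ : 2 * l + q + s = 2 * l' + q' + s')
    (hF : doteq ((p, q), (r, s + m % 2)) ((p', q'), (r', s' + m % 2))) :
    (l = l' ∧ p = p' ∧ q = q' ∧ r = r' ∧ s = s') ∨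
    (p = q' ∧ q = p' ∧ r = s' + m % 2 ∧ s = r' - m % 2 ∧
      2 * l = 2 * l' - p' + q' - r' + s' + m % 2) :=
  classification_core_general m l p q r s l' p' q' r' s' hJ hF
end
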